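/- arXiv:2312.09709 — 2 statements merged into one kernel-verified Lean document; each statement's English description precedes it below -/
import Mathlib

section
/- If M (of size m × p) and N (of size m × q) are real matrices that are column-wise orthogonal, i.e., MᵀN = 0, then the nuclear norm of the column-wise concatenation equals the sum of the nuclear norms: ‖[M, N]‖_* = ‖M‖_* + ‖N‖_*. -/
/-! Column-wise orthogonality makes `[M, N]ᵀ * [M, N]` block diagonal with blocks `Mᵀ * M` and
`Nᵀ * N`, so its characteristic polynomial is the product of theirs and its eigenvalues, counted
with multiplicity, are those of `Mᵀ * M` together with those of `Nᵀ * N`. -/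

open Matrix Polynomial

/-- The nuclear norm of a real matrix `A`: the sum of its singular values, i.e. the sum of the
square roots of the eigenvalues of the positive semidefinite symmetric matrix `Aᵀ * A`. -/
noncomputable def nuclearNorm {m n : Type*} [Fintype m] [Fintype n] [DecidableEq n]
    (A : Matrix m n ℝ) : ℝ :=
  ∑ i, Real.sqrt ((Matrix.isHermitian_conjTranspose_mul_self A).eigenvalues i)

namespace Matrix

theorem IsHermitian.sum_eigenvalues_eq_add_of_charpoly_eq_mul {𝕜 n p q : Type*} [RCLike 𝕜]
    [Fintype n] [DecidableEq n] [Fintype p] [DecidableEq p] [Fintype q] [DecidableEq q]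
    {A : Matrix n n 𝕜} {B : Matrix p p 𝕜} {C : Matrix q q 𝕜}
    (hA : A.IsHermitian) (hB : B.IsHermitian) (hC : C.IsHermitian)
    (h : A.charpoly = B.charpoly * C.charpoly) (f : ℝ → ℝ) :
    ∑ i, f (hA.eigenvalues i) = ∑ i, f (hB.eigenvalues i) + ∑ i, f (hC.eigenvalues i) := by
  have hroots := congrArg Polynomial.roots h
  rw [roots_mul ((charpoly_monic B).mul (charpoly_monic C)).ne_zero,
    hA.roots_charpoly_eq_eigenvalues, hB.roots_charpoly_eq_eigenvalues,
    hC.roots_charpoly_eq_eigenvalues] at hroots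
  have hsum := congrArg (fun s => (s.map (f ∘ RCLike.re)).sum) hroots
  simp only [Multiset.map_add, Multiset.sum_add, Multiset.map_map, Function.comp_def,
    RCLike.ofReal_re] at hsum
  exact hsum

theorem transpose_fromCols_mul_fromCols_of_transpose_mul_eq_zero {R m p q : Type*} [CommSemiring R]
    [Fintype m] {M : Matrix m p R} {N : Matrix m q R} (h : Mᵀ * N = 0) :
    (fromCols M N)ᵀ * fromCols M N = fromBlocks (Mᵀ * M) 0 0 (Nᵀ * N) := by
  have h' : Nᵀ * M = 0 := by
    rw [← transpose_transpose (Nᵀ * M), transpose_mul, transpose_transpose, h, transpose_zero]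
  rw [transpose_fromCols, fromRows_mul_fromCols, h, h']

end Matrix

/-- If `M` and `N` are column-wise orthogonal, i.e. `Mᵀ * N = 0`, then the nuclear norm of the
column-wise concatenation `[M, N]` equals the sum of the nuclear norms of `M` and `N`. -/
theorem nuclearNorm_fromColumns_of_orthogonal {m p q : Type*} [Fintype m] [Fintype p] [Fintype q]
    [DecidableEq p] [DecidableEq q] (M : Matrix m p ℝ) (N : Matrix m q ℝ)
    (h : Mᵀ * N = 0) :
    nuclearNorm (Matrix.fromCols M N) = nuclearNorm M + nuclearNorm N := by
  have hchar :
      ((fromCols M N)ᴴ * fromCols M N).charpoly = (Mᴴ * M).charpoly * (Nᴴ * N).charpoly := by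
    simp only [conjTranspose_eq_transpose_of_trivial]
    rw [transpose_fromCols_mul_fromCols_of_transpose_mul_eq_zero h, charpoly_fromBlocks_zero₁₂]
  exact IsHermitian.sum_eigenvalues_eq_add_of_charpoly_eq_mul _ _ _ hchar Real.sqrt
end

section
/- Let X be a real matrix whose columns are partitioned into finitely many blocks X_1, …, X_V (so X is the column-wise concatenation [X_1, X_2, …, X_V]). Then the sum of the nuclear norms of the blocks is at least the nuclear norm of the full matrix: ∑_{v=1}^{V} ‖X_v‖_* − ‖X‖_* ≥ 0. -/
open scoped MatrixOrder

namespace Matrix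

variable {l m n : Type*}

theorem dotProduct_le_sqrt_mul_sqrt [Fintype n] (a b : n → ℝ) :
    a ⬝ᵥ b ≤ √(a ⬝ᵥ a) * √(b ⬝ᵥ b) := by
  simpa only [dotProduct, sq] using Real.sum_mul_le_sqrt_mul_sqrt Finset.univ a b

theorem mulVec_dotProduct_mulVec_self [Fintype m] [Fintype n] (M : Matrix m n ℝ) (x : n → ℝ) :
    (M *ᵥ x) ⬝ᵥ (M *ᵥ x) = x ⬝ᵥ ((Mᵀ * M) *ᵥ x) := by
  rw [← mulVec_mulVec, dotProduct_mulVec x Mᵀ, vecMul_transpose]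

theorem mulVec_dotProduct_mulVec_self_le [Fintype m] [Fintype n] [DecidableEq n]
    {Q : Matrix m n ℝ} (hQ : Qᵀ * Q ≤ 1) (x : n → ℝ) : (Q *ᵥ x) ⬝ᵥ (Q *ᵥ x) ≤ x ⬝ᵥ x := by
  have := (le_iff.mp hQ).dotProduct_mulVec_nonneg x
  rwa [star_trivial, sub_mulVec, dotProduct_sub, one_mulVec, sub_nonneg,
    ← mulVec_dotProduct_mulVec_self] at this

theorem transpose_mul_self_submatrix_le_one [Fintype l] [Fintype m] [DecidableEq l]
    [DecidableEq n] {Q : Matrix m n ℝ} (hQ : Qᵀ * Q ≤ 1) {e : l → n}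
    (he : Function.Injective e) : (Q.submatrix id e)ᵀ * Q.submatrix id e ≤ 1 := by
  rw [le_iff, transpose_submatrix, ← submatrix_mul _ _ _ _ _ Function.bijective_id,
    ← submatrix_one e he]
  exact (le_iff.mp hQ).submatrix e

theorem trace_eq_sum_dotProduct_mulVec [Fintype n] (M : Matrix n n ℝ)
    (b : OrthonormalBasis n ℝ (EuclideanSpace ℝ n)) :
    M.trace = ∑ j, ⇑(b j) ⬝ᵥ (M *ᵥ ⇑(b j)) := by
  classical
  calc M.trace = LinearMap.trace ℝ _ (toEuclideanLin M) := by
        rw [LinearMap.trace_eq_matrix_trace ℝ (EuclideanSpace.basisFun n ℝ).toBasis,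
          toEuclideanLin_eq_toLin_orthonormal, LinearMap.toMatrix_toLin]
    _ = ∑ j, ⇑(b j) ⬝ᵥ (M *ᵥ ⇑(b j)) := by
        simp [LinearMap.trace_eq_sum_inner _ b, EuclideanSpace.inner_eq_star_dotProduct,
          dotProduct_comm]

theorem trace_transpose_mul_le_nuclearNorm [Fintype m] [Fintype n] [DecidableEq n]
    {Q A : Matrix m n ℝ} (hQ : Qᵀ * Q ≤ 1) : (Qᵀ * A).trace ≤ nuclearNorm A := by
  set h := isHermitian_conjTranspose_mul_self A
  set u : n → n → ℝ := fun j ↦ ⇑(h.eigenvectorBasis j)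
  have hu (j : n) : u j ⬝ᵥ u j = 1 := by
    have := real_inner_self_eq_norm_sq (h.eigenvectorBasis j)
    rw [h.eigenvectorBasis.orthonormal.1 j, EuclideanSpace.inner_eq_star_dotProduct] at this
    simpa [u, dotProduct_comm] using this
  have hAu (j : n) : (A *ᵥ u j) ⬝ᵥ (A *ᵥ u j) = h.eigenvalues j := by
    rw [mulVec_dotProduct_mulVec_self, ← conjTranspose_eq_transpose_of_trivial,
      h.mulVec_eigenvectorBasis, dotProduct_smul, hu, smul_eq_mul, mul_one]
  rw [trace_eq_sum_dotProduct_mulVec _ h.eigenvectorBasis, nuclearNorm]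
  gcongr with j
  calc u j ⬝ᵥ ((Qᵀ * A) *ᵥ u j) = (Q *ᵥ u j) ⬝ᵥ (A *ᵥ u j) := by
        rw [← mulVec_mulVec, dotProduct_mulVec, vecMul_transpose]
    _ ≤ √((Q *ᵥ u j) ⬝ᵥ (Q *ᵥ u j)) * √((A *ᵥ u j) ⬝ᵥ (A *ᵥ u j)) :=
        dotProduct_le_sqrt_mul_sqrt _ _
    _ ≤ √(u j ⬝ᵥ u j) * √(h.eigenvalues j) := by
        rw [hAu]
        gcongr
        exact mulVec_dotProduct_mulVec_self_le hQ _
    _ = √(h.eigenvalues j) := by rw [hu, Real.sqrt_one, one_mul]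

theorem IsHermitian.trace_cfc {𝕜 : Type*} [RCLike 𝕜] [Fintype n] [DecidableEq n]
    {A : Matrix n n 𝕜} (hA : A.IsHermitian) (f : ℝ → ℝ) :
    (cfc f A).trace = ∑ i, (f (hA.eigenvalues i) : 𝕜) := by
  rw [hA.cfc_eq, IsHermitian.cfc, Unitary.conjStarAlgAut_apply, trace_mul_cycle,
    Unitary.coe_star_mul_self, one_mul, trace_diagonal]
  rfl

theorem exists_transpose_mul_self_le_one_trace_eq_nuclearNorm [Fintype m] [Fintype n]
    [DecidableEq n] (X : Matrix m n ℝ) :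
    ∃ Q : Matrix m n ℝ, Qᵀ * Q ≤ 1 ∧ (Qᵀ * X).trace = nuclearNorm X := by
  set A := Xᴴ * X
  have hA : A.IsHermitian := isHermitian_conjTranspose_mul_self X
  have hcont (f : ℝ → ℝ) : ContinuousOn f (spectrum ℝ A) := A.finite_real_spectrum.continuousOn f
  -- `(√0)⁻¹ = 0`, so `S` inverts `√A` on the range of `A` and vanishes on its kernel.
  set S := cfc (fun t : ℝ ↦ (√t)⁻¹) A
  have hS : Sᵀ = S := by
    rw [← conjTranspose_eq_transpose_of_trivial]
    exact (cfc_predicate _ A : IsSelfAdjoint S).star_eq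
  have hSA : S * A = cfc (fun t : ℝ ↦ (√t)⁻¹ * t) A := by
    rw [cfc_mul _ _ _ (hcont _) (hcont _), cfc_id' ℝ A]
  refine ⟨X * S, ?_, ?_⟩
  · have hQQ : (X * S)ᵀ * (X * S) = cfc (fun t : ℝ ↦ (√t)⁻¹ * t * (√t)⁻¹) A := by
      rw [transpose_mul, hS, ← conjTranspose_eq_transpose_of_trivial X, Matrix.mul_assoc,
        ← Matrix.mul_assoc Xᴴ, ← Matrix.mul_assoc, hSA, ← cfc_mul _ _ _ (hcont _) (hcont _)]
    rw [hQQ]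
    refine cfc_le_one _ A fun t _ ↦ ?_
    rcases le_or_gt t 0 with ht | ht
    · simp [Real.sqrt_eq_zero'.mpr ht]
    · rw [mul_right_comm, ← mul_inv, Real.mul_self_sqrt ht.le, inv_mul_cancel₀ ht.ne']
  · rw [transpose_mul, hS, ← conjTranspose_eq_transpose_of_trivial X, Matrix.mul_assoc, hSA,
      hA.trace_cfc, nuclearNorm]
    simp only [inv_mul_eq_div, Real.div_sqrt]
    rfl

theorem trace_mul_eq_sum_sigma {R V : Type*} {n : V → Type*} [NonUnitalNonAssocSemiring R]
    [Fintype m] [Fintype V] [∀ v, Fintype (n v)]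
    (A : Matrix (Σ v, n v) m R) (B : Matrix m (Σ v, n v) R) :
    (A * B).trace = ∑ v, (A.submatrix (Sigma.mk v) id * B.submatrix id (Sigma.mk v)).trace := by
  simp only [trace, Fintype.sum_sigma]
  rfl

end Matrix

/-- For a real matrix `X` whose columns are partitioned into finitely many blocks `X_v`
(columns indexed by a sigma type), the sum of the nuclear norms of the blocks minus the
nuclear norm of the full matrix is nonnegative. -/
theorem sum_nuclearNorm_blocks_sub_nuclearNorm_nonneg
    {m V : Type*} {n : V → Type*} [Fintype m] [Fintype V] [DecidableEq V]
    [∀ v, Fintype (n v)] [∀ v, DecidableEq (n v)]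
    (X : Matrix m (Σ v, n v) ℝ) :
    0 ≤ (∑ v, nuclearNorm (X.submatrix id (Sigma.mk v))) - nuclearNorm X := by
  obtain ⟨Q, hQ, hQX⟩ := Matrix.exists_transpose_mul_self_le_one_trace_eq_nuclearNorm X
  rw [sub_nonneg, ← hQX, Matrix.trace_mul_eq_sum_sigma]
  gcongr with v
  exact Matrix.trace_transpose_mul_le_nuclearNorm
    (Matrix.transpose_mul_self_submatrix_le_one hQ sigma_mk_injective)
end
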